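/- For an n×n matrix A, n×m matrices B_i, and delays 0 = h₀ < h₁ < ... < h_r, suppose x : R → R^n and u : [-h_r, ∞) → R^m are continuously differentiable and satisfy ẋ(t) = A x(t) + Σ_{i=0}^r B_i u(t − h_i). Define y(t) = x(t) + Σ_{i=1}^r ∫_t^{t+h_i} e^{A(t−s)} B_i u(s − h_i) ds. Then y satisfies the delay-free equation ẏ(t) = A y(t) + (Σ_{i=0}^r e^{−A h_i} B_i) u(t). -/

import Mathlib

open Matrix NormedSpace intervalIntegral
attribute [local instance] Matrix.linftyOpNormedRing Matrix.linftyOpNormedAlgebra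

/-- `mulVec` bundled as a continuous bilinear map. -/
noncomputable def stmt16Phi (n m : ℕ) :
    Matrix (Fin n) (Fin m) ℝ →L[ℝ] ((Fin m → ℝ) →L[ℝ] (Fin n → ℝ)) :=
  LinearMap.toContinuousLinearMap
  { toFun := fun M => LinearMap.toContinuousLinearMap M.mulVecLin
    map_add' := by
      intro M N; ext v j
      simp [Matrix.add_mulVec]
    map_smul' := by
      intro c M; ext v j
      simp [Matrix.smul_mulVec] }

@[simp] lemma stmt16Phi_apply (n m : ℕ) (M : Matrix (Fin n) (Fin m) ℝ) (v : Fin m → ℝ) :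
    stmt16Phi n m M v = M.mulVec v := rfl

lemma stmt16_sum_mulVec {ι : Type*} (s : Finset ι) (n m : ℕ)
    (M : ι → Matrix (Fin n) (Fin m) ℝ) (v : Fin m → ℝ) :
    (∑ i ∈ s, M i).mulVec v = ∑ i ∈ s, (M i).mulVec v := by
  classical
  induction s using Finset.induction with
  | empty => simp [Matrix.zero_mulVec]
  | insert a s hx ih => simp [Finset.sum_insert hx, Matrix.add_mulVec, ih]

lemma stmt16_mulVec_sum {ι : Type*} (s : Finset ι) (n m : ℕ)
    (M : Matrix (Fin n) (Fin m) ℝ) (v : ι → (Fin m → ℝ)) :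
    M.mulVec (∑ i ∈ s, v i) = ∑ i ∈ s, M.mulVec (v i) := by
  exact map_sum M.mulVecLin v s

theorem stmt16 (n m r : ℕ) (A : Matrix (Fin n) (Fin n) ℝ)
    (B : Fin (r + 1) → Matrix (Fin n) (Fin m) ℝ)
    (h : Fin (r + 1) → ℝ) (hh0 : h 0 = 0) (hmono : StrictMono h)
    (x : ℝ → Fin n → ℝ) (u : ℝ → Fin m → ℝ)
    (hx : ContDiff ℝ 1 x) (hu : ContDiff ℝ 1 u)
    (hode : ∀ t : ℝ, HasDerivAt x
      (A.mulVec (x t) + ∑ i : Fin (r + 1), (B i).mulVec (u (t - h i))) t)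
    (y : ℝ → Fin n → ℝ)
    (hy : ∀ t : ℝ, y t = x t + ∑ i : Fin (r + 1),
      ∫ s in t..(t + h i), (NormedSpace.exp ((t - s) • A)).mulVec ((B i).mulVec (u (s - h i)))) :
    ∀ t : ℝ, HasDerivAt y
      (A.mulVec (y t) + (∑ i : Fin (r + 1), NormedSpace.exp (-(h i) • A) * B i).mulVec (u t)) t := by
  classical
  set φ := stmt16Phi n n with hφ
  have hφapp : ∀ (M : Matrix (Fin n) (Fin n) ℝ) (v : Fin n → ℝ), φ M v = M.mulVec v :=
    fun _ _ => rfl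
  -- the integrand with the `t`-dependence factored out
  set g : Fin (r + 1) → ℝ → (Fin n → ℝ) :=
    fun i s => (NormedSpace.exp ((-s) • A)).mulVec ((B i).mulVec (u (s - h i))) with hg
  have hgcont : ∀ i, Continuous (g i) := by
    intro i
    apply Continuous.matrix_mulVec
    · exact exp_continuous.comp ((continuous_neg).smul continuous_const)
    · exact continuous_const.matrix_mulVec
        (hu.continuous.comp (continuous_id.sub continuous_const))
  have hgint : ∀ i (a b : ℝ), IntervalIntegrable (g i) MeasureTheory.volume a b :=
    fun i a b => (hgcont i).intervalIntegrable a b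
  -- antiderivative of `g i`
  set V : Fin (r + 1) → ℝ → (Fin n → ℝ) :=
    fun i τ => ∫ s in (0:ℝ)..τ, g i s with hV
  have hVderiv : ∀ i (τ : ℝ), HasDerivAt (V i) (g i τ) τ := by
    intro i τ
    exact intervalIntegral.integral_hasDerivAt_right (hgint i 0 τ)
      ((hgcont i).stronglyMeasurable.stronglyMeasurableAtFilter)
      (hgcont i).continuousAt
  -- commuting exponents
  have hcomm : ∀ a b : ℝ, Commute (a • A) (b • A) :=
    fun a b => ((Commute.refl A).smul_left a).smul_right b
  have hexpmul : ∀ a b : ℝ, NormedSpace.exp ((a + b) • A) = NormedSpace.exp (a • A) * NormedSpace.exp (b • A) := by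
    intro a b
    rw [add_smul]
    exact exp_add_of_commute (hcomm a b)
  -- key rewriting of each integral term
  have hterm : ∀ (i : Fin (r + 1)) (τ : ℝ),
      (∫ s in τ..(τ + h i), (NormedSpace.exp ((τ - s) • A)).mulVec ((B i).mulVec (u (s - h i))))
        = φ (NormedSpace.exp (τ • A)) (V i (τ + h i) - V i τ) := by
    intro i τ
    have h1 : ∀ s : ℝ,
        (NormedSpace.exp ((τ - s) • A)).mulVec ((B i).mulVec (u (s - h i)))
          = (φ (NormedSpace.exp (τ • A))) (g i s) := by
      intro s
      have : ((τ : ℝ) - s) = τ + (-s) := by ring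
      rw [hg]
      simp only [hφapp, this, hexpmul τ (-s), Matrix.mulVec_mulVec, Matrix.mul_assoc]
    simp only [h1]
    rw [ContinuousLinearMap.intervalIntegral_comp_comm _ (hgint i τ (τ + h i)), hV]
    congr 1
    exact (intervalIntegral.integral_interval_sub_left (hgint i 0 (τ + h i))
      (hgint i 0 τ)).symm
  -- rewrite y
  have hyE : y = fun τ => x τ + ∑ i : Fin (r + 1),
      φ (NormedSpace.exp (τ • A)) (V i (τ + h i) - V i τ) := by
    funext τ
    rw [hy τ]
    congr 1
    exact Finset.sum_congr rfl fun i _ => hterm i τ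
  intro t
  -- derivative of τ ↦ φ (NormedSpace.exp (τ • A))
  have hφexp : HasDerivAt (fun τ : ℝ => φ (NormedSpace.exp (τ • A)))
      (φ (NormedSpace.exp (t • A) * A)) t :=
    φ.hasFDerivAt.comp_hasDerivAt t (hasDerivAt_exp_smul_const A t)
  -- derivative of τ ↦ V i (τ + h i) - V i τ
  have hVshift : ∀ i : Fin (r + 1),
      HasDerivAt (fun τ : ℝ => V i (τ + h i)) (g i (t + h i)) t := by
    intro i
    have := (hVderiv i (t + h i)).scomp t ((hasDerivAt_id t).add_const (h i))
    simpa [Function.comp_def] using this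
  have hEderiv : ∀ i : Fin (r + 1),
      HasDerivAt (fun τ : ℝ => φ (NormedSpace.exp (τ • A)) (V i (τ + h i) - V i τ))
        (φ (NormedSpace.exp (t • A) * A) (V i (t + h i) - V i t)
          + φ (NormedSpace.exp (t • A)) (g i (t + h i) - g i t)) t := by
    intro i
    exact hφexp.clm_apply ((hVshift i).sub (hVderiv i t))
  have hyderiv : HasDerivAt y
      ((A.mulVec (x t) + ∑ i : Fin (r + 1), (B i).mulVec (u (t - h i)))
        + ∑ i : Fin (r + 1),
          (φ (NormedSpace.exp (t • A) * A) (V i (t + h i) - V i t)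
            + φ (NormedSpace.exp (t • A)) (g i (t + h i) - g i t))) t := by
    rw [hyE]
    exact (hode t).add (HasDerivAt.fun_sum fun i _ => hEderiv i)
  convert hyderiv using 1
  -- now the algebraic identity
  have hAexp : Commute A (NormedSpace.exp (t • A)) :=
    (((Commute.refl A).smul_right t).exp_right)
  have e1 : ∀ i : Fin (r + 1),
      φ (NormedSpace.exp (t • A) * A) (V i (t + h i) - V i t)
        = A.mulVec (φ (NormedSpace.exp (t • A)) (V i (t + h i) - V i t)) := by
    intro i
    rw [← hAexp.eq, hφapp, hφapp, ← Matrix.mulVec_mulVec]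
  have e2 : ∀ i : Fin (r + 1),
      φ (NormedSpace.exp (t • A)) (g i (t + h i)) = (NormedSpace.exp (-(h i) • A) * B i).mulVec (u t) := by
    intro i
    have hmul : NormedSpace.exp (t • A) * NormedSpace.exp ((-(t + h i)) • A) = NormedSpace.exp (-(h i) • A) := by
      rw [← hexpmul t (-(t + h i))]
      congr 1
      ring_nf
    simp only [hφapp, hg, Matrix.mulVec_mulVec, ← Matrix.mul_assoc, hmul,
      add_sub_cancel_right]
  have e3 : ∀ i : Fin (r + 1),
      φ (NormedSpace.exp (t • A)) (g i t) = (B i).mulVec (u (t - h i)) := by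
    intro i
    have hmul : NormedSpace.exp (t • A) * NormedSpace.exp ((-t) • A) = 1 := by
      rw [← hexpmul t (-t)]
      simp
    simp only [hφapp, hg, Matrix.mulVec_mulVec, ← Matrix.mul_assoc, hmul,
      Matrix.one_mul]
  -- expand both sides
  have hyt : y t = x t + ∑ i : Fin (r + 1), φ (NormedSpace.exp (t • A)) (V i (t + h i) - V i t) := by
    rw [hyE]
  rw [hyt]
  simp only [map_sub, e1, e2, e3, Matrix.mulVec_add, Matrix.mulVec_sub, stmt16_sum_mulVec,
    stmt16_mulVec_sum, Finset.sum_add_distrib, Finset.sum_sub_distrib]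
  abel
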